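/- arXiv:2103.00585 — 3 statements merged into one kernel-verified Lean document; each statement's English description precedes it below -/
import Mathlib

section
/- Let r : (Y,κ) → (U,κ) be a digital retraction, where U ⊆ Y and both carry κ-adjacency, with Y and U connected. If TC(r)^{κ,κ} = 1, then the digital Schwarz genus of r equals 1, i.e. r admits a continuous global section. -/
/-! Basic notions of digital topology (Rosenfeld, Boxer, et al.). -/

/-- Equality-or-adjacency: `u ⟷=_κ v`. -/
def adjEq {α : Type*} (κ : α → α → Prop) (u v : α) : Prop := u = v ∨ κ u v

/-- 2-adjacency (i.e. `c₁`) on `ℤ`. -/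
def adjZ (u v : ℤ) : Prop := |u - v| = 1

/-- The `c_l`-adjacency on `ℤ^n`: distinct points, coordinatewise equal or differing by 1,
with at most `l` coordinates differing by 1. -/
def clAdj (n l : ℕ) (u v : Fin n → ℤ) : Prop :=
  u ≠ v ∧ (∀ k, u k = v k ∨ |u k - v k| = 1) ∧
    (Finset.univ.filter fun j => |u j - v j| = 1).card ≤ l

/-- 4-adjacency (i.e. `c₁`) on `ℤ²`. -/
def adj4 (u v : ℤ × ℤ) : Prop :=
  (u.1 = v.1 ∧ |u.2 - v.2| = 1) ∨ (u.2 = v.2 ∧ |u.1 - v.1| = 1)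

/-- The adjacency induced on a subset of a digital image. -/
def subAdj {X : Type*} (μ : X → X → Prop) (V : Set X) : ↥V → ↥V → Prop :=
  fun u v => μ u.1 v.1

/-- Digital `(κ,λ)`-continuity of a map. -/
def DigCont {α β : Type*} (κ : α → α → Prop) (lam : β → β → Prop) (f : α → β) : Prop :=
  ∀ u v, κ u v → adjEq lam (f u) (f v)

/-- The digital interval `[0,m]_ℤ`. -/
def DigInt (m : ℕ) : Type := ↥(Set.Icc (0 : ℤ) (m : ℤ))

/-- 2-adjacency on the digital interval. -/
def intAdj (m : ℕ) : DigInt m → DigInt m → Prop := fun s t => adjZ s.1 t.1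

/-- The left endpoint `0` of `[0,m]_ℤ`. -/
def pt0 (m : ℕ) : DigInt m := ⟨0, by simp⟩

/-- The right endpoint `m` of `[0,m]_ℤ`. -/
def ptm (m : ℕ) : DigInt m := ⟨(m : ℤ), by simp⟩

/-- The digital path space `Y^{[0,m]_ℤ}`: `(2,κ)`-continuous maps `[0,m]_ℤ → Y`. -/
def DigPathSpace {Y : Type*} (κ : Y → Y → Prop) (m : ℕ) : Type _ :=
  {α : DigInt m → Y // DigCont (intAdj m) κ α}

/-- The function-space adjacency `κ_*` on the digital path space. -/
def pathAdj {Y : Type*} (κ : Y → Y → Prop) (m : ℕ) :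
    DigPathSpace κ m → DigPathSpace κ m → Prop :=
  fun α β => ∀ s t, adjEq (intAdj m) s t → adjEq κ (α.1 s) (β.1 t)

/-- The product adjacency on `Y × Z`. -/
def prodAdj {Y Z : Type*} (κ : Y → Y → Prop) (lam : Z → Z → Prop) :
    Y × Z → Y × Z → Prop :=
  fun p q => p ≠ q ∧ adjEq κ p.1 q.1 ∧ adjEq lam p.2 q.2

/-- Digital (`κ`-)connectedness: any two points are joined by a digital path. -/
def DigConnected {Y : Type*} (κ : Y → Y → Prop) : Prop :=
  ∀ y z : Y, ∃ m : ℕ, ∃ α : DigPathSpace κ m, α.1 (pt0 m) = y ∧ α.1 (ptm m) = z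

/-- Digital homotopy of `(κ,λ)`-continuous maps. -/
def DigHomotopic {Y Z : Type*} (κ : Y → Y → Prop) (lam : Z → Z → Prop) (f g : Y → Z) : Prop :=
  ∃ m : ℕ, ∃ G : Y × DigInt m → Z,
    (∀ y, G (y, pt0 m) = f y) ∧ (∀ y, G (y, ptm m) = g y) ∧
    (∀ t, DigCont κ lam fun y => G (y, t)) ∧
    (∀ y, DigCont (intAdj m) lam fun t => G (y, t))

/-- Digital `κ`-contractibility: the identity is digitally homotopic to a constant map. -/
def DigContractible {Y : Type*} (κ : Y → Y → Prop) : Prop :=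
  ∃ y0 : Y, DigHomotopic κ κ id fun _ => y0

/-- The map `π_g : Y^{[0,m]_ℤ} → Y × Z`, `α ↦ (α(0), g(α(m)))`. -/
def piMap {Y Z : Type*} (κ : Y → Y → Prop) (g : Y → Z) (m : ℕ)
    (α : DigPathSpace κ m) : Y × Z :=
  (α.1 (pt0 m), g (α.1 (ptm m)))

/-- The digital Schwarz genus of `q : A → B` is at most `l`: there is a cover of `B` by `l`
sets, each admitting a digitally continuous section of `q`. -/
def GenusLE {A B : Type*} (κA : A → A → Prop) (κB : B → B → Prop) (q : A → B) (l : ℕ) : Prop :=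
  ∃ W : Fin l → Set B, (∀ b, ∃ i, b ∈ W i) ∧
    ∀ i, ∃ s : ↥(W i) → A, DigCont (subAdj κB (W i)) κA s ∧ ∀ b : ↥(W i), q (s b) = b.1

/-- The digital Schwarz genus of `q : A → B`. -/
noncomputable def digGenus {A B : Type*} (κA : A → A → Prop) (κB : B → B → Prop)
    (q : A → B) : ℕ :=
  sInf {l | GenusLE κA κB q l}

/-- The digital topological complexity `TC(g)^{κ,λ}` of a digital map `g : (Y,κ) → (Z,λ)`:
the minimum over positive `m` of the digital Schwarz genus of `π_g`. -/
noncomputable def digTCmap {Y Z : Type*} (κ : Y → Y → Prop) (lam : Z → Z → Prop)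
    (g : Y → Z) : ℕ :=
  sInf {c | ∃ m : ℕ, 0 < m ∧ c = digGenus (pathAdj κ m) (prodAdj κ lam) (piMap κ g m)}

/-- The digital topological complexity `TC(Y,κ)`: the minimum over positive `m` of the
digital Schwarz genus of `π : Y^{[0,m]_ℤ} → Y × Y`, `α ↦ (α(0), α(m))`. -/
noncomputable def digTC {Y : Type*} (κ : Y → Y → Prop) : ℕ :=
  sInf {c | ∃ m : ℕ, 0 < m ∧ c = digGenus (pathAdj κ m) (prodAdj κ κ)
      (fun α : DigPathSpace κ m => (α.1 (pt0 m), α.1 (ptm m)))}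

/-- The digital LS-category of `(X,μ)` is at most `l`: `X` is covered by `l` sets whose
inclusions are digitally homotopic to constant maps. -/
def DigCatLE {X : Type*} (μ : X → X → Prop) (l : ℕ) : Prop :=
  ∃ V : Fin l → Set X, (∀ x, ∃ i, x ∈ V i) ∧
    ∀ i, ∃ x0 : X, DigHomotopic (subAdj μ (V i)) μ (fun v => v.1) fun _ => x0

/-- The digital LS-category `cat_μ(X)`. -/
noncomputable def digCat {X : Type*} (μ : X → X → Prop) : ℕ := sInf {l | DigCatLE μ l}

/-- The digital homotopy lifting property of `g : (Y,κ) → (Z,λ)` w.r.t. `(A,ρ)`. -/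
def HLP {A Y Z : Type*} (ρ : A → A → Prop) (κ : Y → Y → Prop) (lam : Z → Z → Prop)
    (g : Y → Z) : Prop :=
  ∀ f : A → Y, DigCont ρ κ f →
    ∀ (m : ℕ) (H : A × DigInt m → Z),
      (∀ t, DigCont ρ lam fun a => H (a, t)) →
      (∀ a, DigCont (intAdj m) lam fun t => H (a, t)) →
      (∀ a, H (a, pt0 m) = g (f a)) →
      ∃ HT : A × DigInt m → Y,
        (∀ t, DigCont ρ κ fun a => HT (a, t)) ∧
        (∀ a, DigCont (intAdj m) κ fun t => HT (a, t)) ∧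
        (∀ a, HT (a, pt0 m) = f a) ∧
        ∀ x, g (HT x) = H x

/-- A digital fibration: a digitally continuous map with the digital homotopy lifting
property with respect to every digital image (i.e. every subset of some `ℤ^p` with a
`c_q`-adjacency). -/
def DigFibration {Y Z : Type*} (κ : Y → Y → Prop) (lam : Z → Z → Prop) (g : Y → Z) : Prop :=
  DigCont κ lam g ∧
    ∀ (p q : ℕ), 1 ≤ q → q ≤ p → ∀ A : Set (Fin p → ℤ),
      HLP (subAdj (clAdj p q) A) κ lam g

/-- Digitally fiber homotopic maps `h k : (T,ρ) → (Y,κ)` over a fibration `g : Y → Z`. -/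
def DigFiberHomotopic {T Y Z : Type*} (ρ : T → T → Prop) (κ : Y → Y → Prop)
    (g : Y → Z) (h k : T → Y) : Prop :=
  ∃ m : ℕ, ∃ G : T × DigInt m → Y,
    (∀ y, G (y, pt0 m) = h y) ∧ (∀ y, G (y, ptm m) = k y) ∧
    (∀ t, DigCont ρ κ fun y => G (y, t)) ∧
    (∀ y, DigCont (intAdj m) κ fun t => G (y, t)) ∧
    ∀ y t, g (G (y, t)) = g (h y)

/-- Digital fiber homotopy equivalence of two digital fibrations over the same base. -/
def DigFHE {Y₁ Y₂ Z : Type*} (κ₁ : Y₁ → Y₁ → Prop) (κ₂ : Y₂ → Y₂ → Prop)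
    (g₁ : Y₁ → Z) (g₂ : Y₂ → Z) : Prop :=
  ∃ h : Y₁ → Y₂, ∃ k : Y₂ → Y₁, DigCont κ₁ κ₂ h ∧ DigCont κ₂ κ₁ k ∧
    DigFiberHomotopic κ₁ κ₁ g₁ (k ∘ h) id ∧ DigFiberHomotopic κ₂ κ₂ g₂ (h ∘ k) id

/-- A digital isomorphism: a digitally continuous map with a digitally continuous
two-sided inverse. -/
def DigIso {A B : Type*} (κA : A → A → Prop) (κB : B → B → Prop) (f : A → B) : Prop :=
  DigCont κA κB f ∧ ∃ h : B → A, DigCont κB κA h ∧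
    Function.LeftInverse h f ∧ Function.RightInverse h f

/-- Digitally isomorphic digital images. -/
def DigIsomorphic {A B : Type*} (κA : A → A → Prop) (κB : B → B → Prop) : Prop :=
  ∃ f : A → B, DigIso κA κB f

/-- The adjacency induced on `g⁻¹(S)` from `(Y,κ)`. -/
def fiberAdj {Y Z : Type*} (κ : Y → Y → Prop) (g : Y → Z) (S : Set Z) :
    {y : Y // g y ∈ S} → {y : Y // g y ∈ S} → Prop :=
  fun u v => κ u.1 v.1

/-- A digital fiber bundle `(Y, g, Z, T)`: `g` is a continuous surjection onto a connected
image `Z`, all fibers are digitally isomorphic to `T`, and `g` is locally trivial over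
connected subsets of `Z`. -/
def DigFiberBundle {Y Z T : Type*} (κ : Y → Y → Prop) (lam : Z → Z → Prop)
    (ρ : T → T → Prop) (g : Y → Z) : Prop :=
  Function.Surjective g ∧ DigCont κ lam g ∧ DigConnected lam ∧
  (∀ z : Z, DigIsomorphic (fiberAdj κ g ({z} : Set Z)) ρ) ∧
  ∀ z : Z, ∃ V : Set Z, z ∈ V ∧ DigConnected (subAdj lam V) ∧
    ∃ φ : {y : Y // g y ∈ V} → ↥V × T,
      DigIso (fiberAdj κ g V) (prodAdj (subAdj lam V) ρ) φ ∧
      ∀ y, ((φ y).1 : Z) = g y.1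

/-- For a digital retraction `r : (Y,κ) → (U,κ)` with `U ⊆ Y` and both
images connected, if `TC(r)^{κ,κ} = 1` then the digital Schwarz genus of `r` is `1`,
i.e. `r` admits a digitally continuous global section. -/
theorem digGenus_retraction_eq_one (n l : ℕ) (hl1 : 1 ≤ l) (hln : l ≤ n)
    (Y U : Set (Fin n → ℤ)) (hUY : U ⊆ Y) (r : ↥Y → ↥U)
    (hrcont : DigCont (subAdj (clAdj n l) Y) (subAdj (clAdj n l) U) r)
    (hretr : ∀ (y : ↥Y) (h : y.1 ∈ U), r y = ⟨y.1, h⟩)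
    (hYconn : DigConnected (subAdj (clAdj n l) Y))
    (hUconn : DigConnected (subAdj (clAdj n l) U))
    (hTC : digTCmap (subAdj (clAdj n l) Y) (subAdj (clAdj n l) U) r = 1) :
    digGenus (subAdj (clAdj n l) Y) (subAdj (clAdj n l) U) r = 1 ∧
    ∃ s : ↥U → ↥Y, DigCont (subAdj (clAdj n l) U) (subAdj (clAdj n l) Y) s ∧
      ∀ u, r (s u) = u := by
  classical
  have hTC' : sInf {c | ∃ m : ℕ, 0 < m ∧ c = digGenus (pathAdj (subAdj (clAdj n l) Y) m)
      (prodAdj (subAdj (clAdj n l) Y) (subAdj (clAdj n l) U))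
      (piMap (subAdj (clAdj n l) Y) r m)} = 1 := hTC
  have hSne : {c | ∃ m : ℕ, 0 < m ∧ c = digGenus (pathAdj (subAdj (clAdj n l) Y) m)
      (prodAdj (subAdj (clAdj n l) Y) (subAdj (clAdj n l) U))
      (piMap (subAdj (clAdj n l) Y) r m)}.Nonempty := by
    by_contra h
    rw [Set.not_nonempty_iff_eq_empty] at h
    rw [h, Nat.sInf_empty] at hTC'
    exact one_ne_zero hTC'.symm
  have h1S := hTC' ▸ Nat.sInf_mem hSne
  obtain ⟨m, hm, hgen⟩ := h1S
  have hgen' : sInf {k | GenusLE (pathAdj (subAdj (clAdj n l) Y) m)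
      (prodAdj (subAdj (clAdj n l) Y) (subAdj (clAdj n l) U))
      (piMap (subAdj (clAdj n l) Y) r m) k} = 1 := hgen.symm
  have hGne : {k | GenusLE (pathAdj (subAdj (clAdj n l) Y) m)
      (prodAdj (subAdj (clAdj n l) Y) (subAdj (clAdj n l) U))
      (piMap (subAdj (clAdj n l) Y) r m) k}.Nonempty := by
    by_contra h
    rw [Set.not_nonempty_iff_eq_empty] at h
    rw [h, Nat.sInf_empty] at hgen'
    exact one_ne_zero hgen'.symm
  have h1G := hgen' ▸ Nat.sInf_mem hGne
  have h0G : (0:ℕ) ∉ {k | GenusLE (pathAdj (subAdj (clAdj n l) Y) m)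
      (prodAdj (subAdj (clAdj n l) Y) (subAdj (clAdj n l) U))
      (piMap (subAdj (clAdj n l) Y) r m) k} := by
    intro h
    have h2 := Nat.sInf_le h
    rw [hgen'] at h2
    omega
  have hUne : Nonempty ↥U := by
    by_contra hne
    apply h0G
    refine ⟨Fin.elim0, ?_, fun i => i.elim0⟩
    intro b
    exact absurd ⟨b.2⟩ hne
  obtain ⟨W, hcov, hsec⟩ := h1G
  obtain ⟨σ, hσc, hσs⟩ := hsec 0
  have hmem : ∀ u : ↥U, (((⟨u.1, hUY u.2⟩ : ↥Y), u) : ↥Y × ↥U) ∈ W 0 := by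
    intro u
    obtain ⟨i, hi⟩ := hcov ((⟨u.1, hUY u.2⟩ : ↥Y), u)
    rwa [Subsingleton.elim i 0] at hi
  set s : ↥U → ↥Y := fun u => (σ ⟨((⟨u.1, hUY u.2⟩ : ↥Y), u), hmem u⟩).1 (ptm m) with hs
  have hsr : ∀ u, r (s u) = u := by
    intro u
    have h := hσs ⟨((⟨u.1, hUY u.2⟩ : ↥Y), u), hmem u⟩
    exact congrArg Prod.snd h
  have hscont : DigCont (subAdj (clAdj n l) U) (subAdj (clAdj n l) Y) s := by
    intro u v huv
    have hne : ((((⟨u.1, hUY u.2⟩ : ↥Y), u)) : ↥Y × ↥U) ≠ ((⟨v.1, hUY v.2⟩ : ↥Y), v) := by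
      intro h
      exact huv.1 (congrArg (fun p : ↥Y × ↥U => (p.2 : Fin n → ℤ)) h)
    have hadj : prodAdj (subAdj (clAdj n l) Y) (subAdj (clAdj n l) U)
        ((⟨u.1, hUY u.2⟩ : ↥Y), u) ((⟨v.1, hUY v.2⟩ : ↥Y), v) :=
      ⟨hne, Or.inr huv, Or.inr huv⟩
    have h := hσc ⟨_, hmem u⟩ ⟨_, hmem v⟩ hadj
    rcases h with h | h
    · exact Or.inl (congrArg (fun α : DigPathSpace (subAdj (clAdj n l) Y) m => α.1 (ptm m)) h)
    · exact h (ptm m) (ptm m) (Or.inl rfl)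
  have h1 : GenusLE (subAdj (clAdj n l) Y) (subAdj (clAdj n l) U) r 1 := by
    refine ⟨fun _ => Set.univ, fun b => ⟨0, trivial⟩,
      fun i => ⟨fun b => s b.1, ?_, fun b => hsr b.1⟩⟩
    intro u v huv
    exact hscont u.1 v.1 huv
  have hle : digGenus (subAdj (clAdj n l) Y) (subAdj (clAdj n l) U) r ≤ 1 := Nat.sInf_le h1
  have hne0 : digGenus (subAdj (clAdj n l) Y) (subAdj (clAdj n l) U) r ≠ 0 := by
    intro h
    have hmem0 : GenusLE (subAdj (clAdj n l) Y) (subAdj (clAdj n l) U) r 0 :=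
      h ▸ Nat.sInf_mem (⟨1, h1⟩ : Set.Nonempty
        {k | GenusLE (subAdj (clAdj n l) Y) (subAdj (clAdj n l) U) r k})
    obtain ⟨W0, hc0, _⟩ := hmem0
    obtain ⟨u0⟩ := hUne
    obtain ⟨i, _⟩ := hc0 u0
    exact i.elim0
  exact ⟨by omega, s, hscont, hsr⟩
end

section
/- If a digital image (Y,κ) is κ-contractible, then for every positive integer m the digital path space Y^{[0,m]_ℤ}, equipped with its function-space adjacency κ_*, is κ_*-contractible. -/
/- A path `α` contracts to the constant path at its start `α(0)` by being stopped ever earlier,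
`α_t(s) = α(min s (m - t))`. Following this by the contraction of `Y`, applied to the start
point, contracts the path space. -/

lemma DigCont.map_adjEq {α β : Type*} {κ : α → α → Prop} {lam : β → β → Prop} {f : α → β}
    (hf : DigCont κ lam f) {u v : α} (h : adjEq κ u v) : adjEq lam (f u) (f v) := by
  rcases h with rfl | h
  · exact Or.inl rfl
  · exact hf u v h

namespace DigInt

variable {m : ℕ}

lemma adjEq_iff_abs_sub_le {s t : DigInt m} : adjEq (intAdj m) s t ↔ |s.1 - t.1| ≤ 1 := by
  refine ⟨by rintro (rfl | h) <;> simp_all [intAdj, adjZ], fun h => ?_⟩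
  by_cases hst : s.1 = t.1
  · exact Or.inl (Subtype.ext hst)
  · refine Or.inr ?_
    rw [intAdj, adjZ, abs_eq zero_le_one]
    rw [abs_le] at h
    omega

def clamp (m : ℕ) (z : ℤ) : DigInt m :=
  ⟨max 0 (min z m), le_max_left _ _, max_le (Int.natCast_nonneg m) (min_le_right _ _)⟩

lemma clamp_val (s : DigInt m) : clamp m s.1 = s := by
  obtain ⟨s, hs0, hsm⟩ := s
  exact Subtype.ext (by simp [clamp, hs0, hsm])

lemma clamp_zero : clamp m 0 = pt0 m := clamp_val (pt0 m)

lemma clamp_natCast_self : clamp m m = ptm m := clamp_val (ptm m)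

lemma adjEq_clamp {a b : ℤ} (h : |a - b| ≤ 1) : adjEq (intAdj m) (clamp m a) (clamp m b) := by
  rw [adjEq_iff_abs_sub_le]
  simp only [clamp, abs_le] at h ⊢
  omega

end DigInt

lemma DigCont.adjEq_clamp {β : Type*} {lam : β → β → Prop} {m : ℕ} {f : DigInt m → β}
    (hf : DigCont (intAdj m) lam f) {a b : ℤ} (h : |a - b| ≤ 1) :
    adjEq lam (f (DigInt.clamp m a)) (f (DigInt.clamp m b)) :=
  hf.map_adjEq (DigInt.adjEq_clamp h)

namespace DigHomotopic

variable {X Z W V : Type*} {κ : X → X → Prop} {lam : Z → Z → Prop}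

theorem trans {f g h : X → Z} (hfg : DigHomotopic κ lam f g) (hgh : DigHomotopic κ lam g h) :
    DigHomotopic κ lam f h := by
  obtain ⟨m₁, G₁, hG₁0, hG₁m, hG₁x, hG₁t⟩ := hfg
  obtain ⟨m₂, G₂, hG₂0, hG₂m, hG₂x, hG₂t⟩ := hgh
  let G : X × DigInt (m₁ + m₂) → Z := fun p =>
    if p.2.1 ≤ (m₁ : ℤ) then G₁ (p.1, DigInt.clamp m₁ p.2.1)
    else G₂ (p.1, DigInt.clamp m₂ (p.2.1 - m₁))
  have hG_of_le : ∀ x (t : DigInt (m₁ + m₂)), t.1 ≤ (m₁ : ℤ) →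
      G (x, t) = G₁ (x, DigInt.clamp m₁ t.1) := fun x t ht => if_pos ht
  -- At the junction `t = m₁` both pieces equal `g x`.
  have hG_of_ge : ∀ x (t : DigInt (m₁ + m₂)), (m₁ : ℤ) ≤ t.1 →
      G (x, t) = G₂ (x, DigInt.clamp m₂ (t.1 - m₁)) := by
    intro x t ht
    by_cases ht' : t.1 ≤ (m₁ : ℤ)
    · have htm : t.1 = m₁ := le_antisymm ht' ht
      rw [hG_of_le x t ht', htm, sub_self, DigInt.clamp_zero, DigInt.clamp_natCast_self,
        hG₁m, hG₂0]
    · exact if_neg ht'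
  refine ⟨m₁ + m₂, G, fun x => ?_, fun x => ?_, fun t x y hxy => ?_, fun x t t' htt' => ?_⟩
  · rw [hG_of_le x _ (Int.natCast_nonneg m₁)]
    exact (congrArg (fun s => G₁ (x, s)) DigInt.clamp_zero).trans (hG₁0 x)
  · rw [hG_of_ge x _ (by simp [ptm]), show ((ptm (m₁ + m₂)).1 : ℤ) - m₁ = m₂ by simp [ptm],
      DigInt.clamp_natCast_self, hG₂m]
  · by_cases ht : t.1 ≤ (m₁ : ℤ)
    · simpa only [hG_of_le _ t ht] using hG₁x _ x y hxy
    · simpa only [hG_of_ge _ t (le_of_not_ge ht)] using hG₂x _ x y hxy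
  · show adjEq lam (G (x, t)) (G (x, t'))
    have hd : |t.1 - t'.1| ≤ 1 := DigInt.adjEq_iff_abs_sub_le.mp (Or.inr htt')
    rw [abs_le] at hd
    by_cases hle : t.1 ≤ (m₁ : ℤ) ∧ t'.1 ≤ (m₁ : ℤ)
    · rw [hG_of_le x t hle.1, hG_of_le x t' hle.2]
      exact (hG₁t x).adjEq_clamp (abs_le.mpr ⟨by omega, by omega⟩)
    · rw [hG_of_ge x t (by omega), hG_of_ge x t' (by omega)]
      exact (hG₂t x).adjEq_clamp (abs_le.mpr ⟨by omega, by omega⟩)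

theorem comp {μ : W → W → Prop} {ν : V → V → Prop} {f g : X → Z} (hfg : DigHomotopic κ lam f g)
    {e : W → X} (he : DigCont μ κ e) {c : Z → V} (hc : DigCont lam ν c) :
    DigHomotopic μ ν (c ∘ f ∘ e) (c ∘ g ∘ e) := by
  obtain ⟨M, G, hG0, hGM, hGx, hGt⟩ := hfg
  refine ⟨M, fun p => c (G (e p.1, p.2)), fun w => congrArg c (hG0 _),
    fun w => congrArg c (hGM _), fun t u v huv => ?_, fun w s t hst => ?_⟩
  · exact hc.map_adjEq ((hGx t).map_adjEq (he u v huv))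
  · exact hc.map_adjEq (hGt (e w) s t hst)

end DigHomotopic

namespace DigPathSpace

variable {Y : Type*} {κ : Y → Y → Prop} {m : ℕ}

lemma adjEq_apply {α β : DigPathSpace κ m} (hαβ : adjEq (pathAdj κ m) α β) {s t : DigInt m}
    (hst : adjEq (intAdj m) s t) : adjEq κ (α.1 s) (β.1 t) := by
  rcases hαβ with rfl | h
  · exact α.2.map_adjEq hst
  · exact h s t hst

lemma digCont_apply (s : DigInt m) : DigCont (pathAdj κ m) κ fun α => α.1 s :=
  fun _ _ h => h s s (Or.inl rfl)

def const (y : Y) : DigPathSpace κ m := ⟨fun _ => y, fun _ _ _ => Or.inl rfl⟩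

lemma digCont_const : DigCont κ (pathAdj κ m) const :=
  fun _ _ h => Or.inr fun _ _ _ => Or.inr h

def stopAt (α : DigPathSpace κ m) (k : ℤ) : DigPathSpace κ m :=
  ⟨fun s => α.1 (DigInt.clamp m (min s.1 k)), fun s t hst =>
    α.2.adjEq_clamp ((abs_min_sub_min_le_max _ _ _ _).trans
      (max_le (le_of_eq hst) (by simp)))⟩

lemma pathAdj_stopAt {α β : DigPathSpace κ m} (hαβ : adjEq (pathAdj κ m) α β) {k k' : ℤ}
    (hk : |k - k'| ≤ 1) : pathAdj κ m (α.stopAt k) (β.stopAt k') := fun _ _ hst =>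
  adjEq_apply hαβ (DigInt.adjEq_clamp ((abs_min_sub_min_le_max _ _ _ _).trans
    (max_le (DigInt.adjEq_iff_abs_sub_le.mp hst) hk)))

lemma stopAt_natCast_self (α : DigPathSpace κ m) : α.stopAt m = α :=
  Subtype.ext <| funext fun s => by
    show α.1 (DigInt.clamp m (min s.1 m)) = α.1 s
    rw [min_eq_left s.2.2, DigInt.clamp_val]

lemma stopAt_zero (α : DigPathSpace κ m) : α.stopAt 0 = const (α.1 (pt0 m)) :=
  Subtype.ext <| funext fun s => by
    show α.1 (DigInt.clamp m (min s.1 0)) = α.1 (pt0 m)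
    rw [min_eq_right s.2.1, DigInt.clamp_zero]

theorem digHomotopic_id_const_apply_pt0 :
    DigHomotopic (pathAdj κ m) (pathAdj κ m) id fun α => const (α.1 (pt0 m)) := by
  refine ⟨m, fun p => p.1.stopAt (m - p.2.1), fun α => ?_, fun α => ?_,
    fun t α β h => Or.inr (pathAdj_stopAt (Or.inr h) (by simp)), fun α s t hst => ?_⟩
  · simpa [pt0] using stopAt_natCast_self α
  · simpa [ptm] using stopAt_zero α
  · refine Or.inr (pathAdj_stopAt (Or.inl rfl) ?_)
    simpa [abs_sub_comm] using (DigInt.adjEq_iff_abs_sub_le.mp (Or.inr hst))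

end DigPathSpace

open DigPathSpace in
theorem DigContractible.pathSpace {Y : Type*} {κ : Y → Y → Prop} (hc : DigContractible κ)
    (m : ℕ) : DigContractible (pathAdj κ m) :=
  let ⟨y₀, hy₀⟩ := hc
  ⟨const y₀, digHomotopic_id_const_apply_pt0.trans (hy₀.comp (digCont_apply _) digCont_const)⟩

theorem digPathSpace_contractible_general (n l : ℕ)
    (Y : Set (Fin n → ℤ)) (hc : DigContractible (subAdj (clAdj n l) Y))
    (m : ℕ) :
    DigContractible (pathAdj (subAdj (clAdj n l) Y) m) :=
  hc.pathSpace m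

/-- If a digital image `(Y,κ)` is κ-contractible, then for every positive
integer `m` the digital path space `Y^{[0,m]_ℤ}` with its function-space adjacency `κ_*`
is `κ_*`-contractible. -/
theorem digPathSpace_contractible (n l : ℕ) (hl1 : 1 ≤ l) (hln : l ≤ n)
    (Y : Set (Fin n → ℤ)) (hc : DigContractible (subAdj (clAdj n l) Y))
    (m : ℕ) (hm : 0 < m) :
    DigContractible (pathAdj (subAdj (clAdj n l) Y) m) :=
  digPathSpace_contractible_general n l Y hc m
end

section
/- Let Y = [−1,1]_ℤ^{n+1} \ {0_{n+1}} ⊆ ℤ^{n+1} be the digital n-sphere with an adjacency relation κ, assumed κ-connected, and let h : (Y,κ) → (Y,κ) be the antipodal map h(y) = −y. Then TC(h)^{κ,κ} = TC(Y,κ). -/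
/-- The digital `n`-sphere `[−1,1]_ℤ^{n+1} \ {0}` in `ℤ^{n+1}`. -/
def digSphere (n : ℕ) : Set (Fin (n + 1) → ℤ) :=
  {y | (∀ i, y i ∈ Set.Icc (-1 : ℤ) 1) ∧ y ≠ 0}

/-- The antipodal map `h(y) = −y` on the digital `n`-sphere. -/
def antipode (n : ℕ) : ↥(digSphere n) → ↥(digSphere n) :=
  fun y => ⟨fun i => -(y.1 i), by
    obtain ⟨h1, h2⟩ := y.2
    refine ⟨fun i => ?_, fun h => h2 ?_⟩
    · have := h1 i
      simp only [Set.mem_Icc] at this ⊢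
      omega
    · funext i
      have := congrFun h i
      simpa using this⟩

lemma clAdj_neg {n l : ℕ} (u v : Fin n → ℤ) (h : clAdj n l u v) :
    clAdj n l (fun i => -(u i)) (fun i => -(v i)) := by
  obtain ⟨h1, h2, h3⟩ := h
  refine ⟨fun he => h1 (funext fun i => ?_), fun k => ?_, ?_⟩
  · have := congrFun he i; simpa using this
  · rcases h2 k with h | h
    · left; show -u k = -v k; rw [h]
    · right; show |(-u k) - (-v k)| = 1
      rw [show -u k - -v k = -(u k - v k) by ring, abs_neg]; exact h
  · simp only [show ∀ j, |(-(u j)) - (-(v j))| = |u j - v j| from fun j => by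
      rw [show -u j - -v j = -(u j - v j) by ring, abs_neg]]
    exact h3

lemma antipode_invol (n : ℕ) (y : ↥(digSphere n)) : antipode n (antipode n y) = y :=
  Subtype.ext (funext fun i => neg_neg _)

lemma antipode_adj (n l : ℕ) (u v : ↥(digSphere n))
    (h : subAdj (clAdj (n + 1) l) (digSphere n) u v) :
    subAdj (clAdj (n + 1) l) (digSphere n) (antipode n u) (antipode n v) :=
  clAdj_neg _ _ h

/-- Composing with an adjacency-preserving involution on the second factor
preserves `GenusLE`. -/
lemma genusLE_comp {A Y : Type*} (κA : A → A → Prop) (κ : Y → Y → Prop)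
    (h : Y → Y) (hinv : ∀ y, h (h y) = y) (hadj : ∀ u v, κ u v → κ (h u) (h v))
    (q : A → Y × Y) (l : ℕ) (H : GenusLE κA (prodAdj κ κ) q l) :
    GenusLE κA (prodAdj κ κ) (fun a => ((q a).1, h (q a).2)) l := by
  obtain ⟨W, hcov, hsec⟩ := H
  refine ⟨fun i => (fun p : Y × Y => (p.1, h p.2)) ⁻¹' W i, ?_, ?_⟩
  · intro b
    obtain ⟨i, hi⟩ := hcov (b.1, h b.2)
    exact ⟨i, hi⟩
  · intro i
    obtain ⟨s, hs, hqs⟩ := hsec i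
    refine ⟨fun b => s ⟨(b.1.1, h b.1.2), b.2⟩, ?_, ?_⟩
    · intro u v huv
      apply hs
      obtain ⟨hne, h1, h2⟩ := huv
      show prodAdj κ κ (u.1.1, h u.1.2) (v.1.1, h v.1.2)
      refine ⟨?_, h1, ?_⟩
      · intro he
        apply hne
        rw [Prod.mk.injEq] at he
        obtain ⟨e1, e2⟩ := he
        have e3 : u.1.2 = v.1.2 := by rw [← hinv u.1.2, e2, hinv]
        exact Prod.ext e1 e3
      · show adjEq κ (h u.1.2) (h v.1.2)
        rcases h2 with h2 | h2
        · exact Or.inl (congrArg h h2)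
        · exact Or.inr (hadj _ _ h2)
    · intro b
      have hq := hqs ⟨(b.1.1, h b.1.2), b.2⟩
      show ((q _).1, h (q _).2) = b.1
      rw [hq]
      exact Prod.ext rfl (hinv _)

/-- For the digital `n`-sphere `Y` with a `c_l`-adjacency `κ`, assumed
κ-connected, the antipodal map `h(y) = −y` satisfies `TC(h)^{κ,κ} = TC(Y,κ)`. -/
theorem digTCmap_antipode_eq_digTC (n l : ℕ) (hl1 : 1 ≤ l) (hln : l ≤ n + 1)
    (hconn : DigConnected (subAdj (clAdj (n + 1) l) (digSphere n))) :
    digTCmap (subAdj (clAdj (n + 1) l) (digSphere n))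
      (subAdj (clAdj (n + 1) l) (digSphere n)) (antipode n) =
      digTC (subAdj (clAdj (n + 1) l) (digSphere n)) := by
  set κ := subAdj (clAdj (n + 1) l) (digSphere n) with hκ
  have hinv := antipode_invol n
  have hadj := antipode_adj n l
  have genus_eq : ∀ m : ℕ,
      digGenus (pathAdj κ m) (prodAdj κ κ) (piMap κ (antipode n) m) =
      digGenus (pathAdj κ m) (prodAdj κ κ)
        (fun α : DigPathSpace κ m => (α.1 (pt0 m), α.1 (ptm m))) := by
    intro m
    unfold digGenus
    congr 1
    ext c
    constructor
    · intro H
      have H2 := genusLE_comp (pathAdj κ m) κ (antipode n) hinv hadj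
        (piMap κ (antipode n) m) c H
      have : (fun a : DigPathSpace κ m =>
          ((piMap κ (antipode n) m a).1, antipode n (piMap κ (antipode n) m a).2)) =
          fun α : DigPathSpace κ m => (α.1 (pt0 m), α.1 (ptm m)) := by
        funext a
        simp only [piMap]
        exact Prod.ext rfl (hinv _)
      rwa [this] at H2
    · intro H
      exact genusLE_comp (pathAdj κ m) κ (antipode n) hinv hadj
        (fun α : DigPathSpace κ m => (α.1 (pt0 m), α.1 (ptm m))) c H
  unfold digTCmap digTC
  congr 1
  ext c
  constructor
  · rintro ⟨m, hm, rfl⟩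
    exact ⟨m, hm, genus_eq m⟩
  · rintro ⟨m, hm, rfl⟩
    exact ⟨m, hm, (genus_eq m).symm⟩
end
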